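/- arXiv:1101.1995 — 5 statements merged into one kernel-verified Lean document; each statement's English description precedes it below -/
import Mathlib

section
/- Let m ≥ 1 be an integer, h > 0, and let f : ℝ → ℝ be (2m+2)-times continuously differentiable on [0,h]. Define the single-interval Euler–Maclaurin quadrature K(f) = (h/2)[f(0) + f(h)] − ∑_{l=1}^{m} (B_{2l}/(2l)!) h^{2l} (f^{(2l−1)}(h) − f^{(2l−1)}(0)). Then |∫_0^h f(x) dx − K(f)| ≤ (|B_{2m+2}|/(2m+2)!) h^{2m+3} sup_{x ∈ [0,h]} |f^{(2m+2)}(x)|; in particular the quadrature error is O(h^{2m+3}). -/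
/-!
With the scaled Bernoulli kernels `P_k(x) = h^k/k! · B_k(x/h)` one has `P_0 = 1`, `P_{k+1}' = P_k`,
`P_1(0) = -h/2`, `P_1(h) = h/2` and `P_k(h) = P_k(0) = h^k B_k/k!` for `k ≥ 2`, the latter vanishing
for odd `k`. Repeated integration by parts of `∫₀ʰ P_k f^{(k)}` therefore turns `∫₀ʰ f` into the
quadrature plus the remainder `∫₀ʰ (P_{2m+2}(x) - P_{2m+2}(0)) f^{(2m+2)}(x) dx`. The kernel
`P_{2m+2} - P_{2m+2}(0)` has constant sign, so the remainder is at most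
`sup |f^{(2m+2)}| · |∫₀ʰ (P_{2m+2} - P_{2m+2}(0))| = sup |f^{(2m+2)}| · h |P_{2m+2}(0)|`.
-/

open Set MeasureTheory intervalIntegral Topology
open scoped Nat

-- Each term of the Fourier series `∑ cos(2πnx)/n^{2k}` of `B_{2k}` is largest at `x = 0`.
theorem neg_one_pow_mul_bernoulliFun_sub_bernoulli_nonneg {k : ℕ} (hk : k ≠ 0) {x : ℝ}
    (hx : x ∈ Icc (0 : ℝ) 1) :
    0 ≤ (-1) ^ k * (bernoulliFun (2 * k) x - bernoulli (2 * k)) := by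
  have hsum := ((hasSum_one_div_nat_pow_mul_cos hk (left_mem_Icc.2 zero_le_one)).sub
    (hasSum_one_div_nat_pow_mul_cos hk hx)).nonneg fun n => by
      rw [← mul_sub]
      exact mul_nonneg (by positivity) (by simpa using Real.cos_le_one (2 * Real.pi * n * x))
  change 0 ≤ _ * bernoulliFun (2 * k) 0 - _ * bernoulliFun (2 * k) x at hsum
  have hc : (0 : ℝ) < (2 * Real.pi) ^ (2 * k) / 2 / (2 * k)! := by positivity
  rw [bernoulliFun_eval_zero] at hsum
  refine (mul_nonneg_iff_of_pos_left hc).mp (hsum.trans_eq ?_)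
  ring

noncomputable def scaledBernoulli (h : ℝ) (k : ℕ) (x : ℝ) : ℝ :=
  h ^ k / k ! * bernoulliFun k (x / h)

section ScaledBernoulli

variable {h : ℝ} {k : ℕ}

theorem continuous_scaledBernoulli (h : ℝ) (k : ℕ) : Continuous (scaledBernoulli h k) := by
  unfold scaledBernoulli
  fun_prop

@[simp]
theorem scaledBernoulli_zero (h x : ℝ) : scaledBernoulli h 0 x = 1 := by
  simp [scaledBernoulli]

theorem hasDerivAt_scaledBernoulli (hh : h ≠ 0) (k : ℕ) (x : ℝ) :
    HasDerivAt (scaledBernoulli h (k + 1)) (scaledBernoulli h k x) x := by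
  have := (((hasDerivAt_bernoulliFun (k + 1) (x / h)).comp x
    ((hasDerivAt_id x).div_const h)).const_mul (h ^ (k + 1) / (k + 1)! : ℝ))
  refine this.congr_deriv ?_
  simp only [scaledBernoulli, Nat.factorial_succ, Nat.add_sub_cancel, Nat.cast_mul]
  field_simp
  ring

theorem scaledBernoulli_apply_zero (h : ℝ) (k : ℕ) :
    scaledBernoulli h k 0 = h ^ k / k ! * bernoulli k := by
  rw [scaledBernoulli, zero_div, bernoulliFun_eval_zero]

theorem scaledBernoulli_apply_self (hh : h ≠ 0) (hk : k ≠ 1) :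
    scaledBernoulli h k h = scaledBernoulli h k 0 := by
  rw [scaledBernoulli, scaledBernoulli, div_self hh, zero_div,
    bernoulliFun_endpoints_eq_of_ne_one hk]

theorem scaledBernoulli_one_apply_self (hh : h ≠ 0) : scaledBernoulli h 1 h = h / 2 := by
  simp [scaledBernoulli, div_self hh]
  ring

theorem scaledBernoulli_one_apply_zero (h : ℝ) : scaledBernoulli h 1 0 = -(h / 2) := by
  simp [scaledBernoulli]
  ring

theorem scaledBernoulli_apply_zero_of_odd (hk : Odd k) (hk1 : k ≠ 1) :
    scaledBernoulli h k 0 = 0 := by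
  rw [scaledBernoulli_apply_zero, bernoulli_eq_bernoulli'_of_ne_one hk1,
    bernoulli'_eq_zero_of_odd hk (by grind [Odd]), Rat.cast_zero, mul_zero]

theorem integral_scaledBernoulli (hh : h ≠ 0) (hk : k ≠ 0) :
    ∫ x in 0..h, scaledBernoulli h k x = 0 := by
  simp only [scaledBernoulli, intervalIntegral.integral_const_mul]
  rw [integral_comp_div (bernoulliFun k) hh, zero_div, div_self hh,
    integral_bernoulliFun_eq_zero hk, smul_zero, mul_zero]

theorem integral_scaledBernoulli_sub_apply_zero (hh : h ≠ 0) (hk : k ≠ 0) :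
    ∫ x in 0..h, (scaledBernoulli h k x - scaledBernoulli h k 0) =
      -(h * scaledBernoulli h k 0) := by
  rw [intervalIntegral.integral_sub ((continuous_scaledBernoulli h k).intervalIntegrable _ _)
    intervalIntegrable_const, integral_scaledBernoulli hh hk, intervalIntegral.integral_const]
  simp

theorem neg_one_pow_mul_scaledBernoulli_sub_apply_zero_nonneg (hh : 0 < h) (hk : k ≠ 0) {x : ℝ}
    (hx : x ∈ Icc 0 h) :
    0 ≤ (-1) ^ k * (scaledBernoulli h (2 * k) x - scaledBernoulli h (2 * k) 0) := by
  have hxh : x / h ∈ Icc (0 : ℝ) 1 := ⟨div_nonneg hx.1 hh.le, (div_le_one hh).2 hx.2⟩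
  rw [scaledBernoulli_apply_zero, scaledBernoulli, ← mul_sub, mul_left_comm]
  exact mul_nonneg (by positivity) (neg_one_pow_mul_bernoulliFun_sub_bernoulli_nonneg hk hxh)

theorem integral_scaledBernoulli_succ_mul_deriv (hh : 0 < h) {u u' : ℝ → ℝ}
    (hu : ContinuousOn u (Icc 0 h)) (hu' : ContinuousOn u' (Icc 0 h))
    (hderiv : ∀ x ∈ Ioo 0 h, HasDerivAt u (u' x) x) (k : ℕ) :
    ∫ x in 0..h, scaledBernoulli h (k + 1) x * u' x =
      scaledBernoulli h (k + 1) h * u h - scaledBernoulli h (k + 1) 0 * u 0 -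
        ∫ x in 0..h, scaledBernoulli h k x * u x := by
  rw [← uIcc_of_le hh.le] at hu hu'
  refine integral_mul_deriv_eq_deriv_mul_of_hasDerivAt
    (continuous_scaledBernoulli h _).continuousOn hu
    (fun x _ => hasDerivAt_scaledBernoulli hh.ne' k x) ?_
    ((continuous_scaledBernoulli h k).intervalIntegrable _ _) (hu'.intervalIntegrable)
  simpa [hh.le] using hderiv

end ScaledBernoulli

theorem ContDiffOn.hasDerivAt_iteratedDerivWithin {𝕜 F : Type*} [NontriviallyNormedField 𝕜]
    [NormedAddCommGroup F] [NormedSpace 𝕜 F] {f : 𝕜 → F} {s : Set 𝕜} {n : WithTop ℕ∞} {k : ℕ}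
    {x : 𝕜} (hf : ContDiffOn 𝕜 n f s) (hs : UniqueDiffOn 𝕜 s) (hk : k < n) (hx : s ∈ 𝓝 x) :
    HasDerivAt (iteratedDerivWithin k f s) (iteratedDerivWithin (k + 1) f s x) x := by
  rw [iteratedDerivWithin_succ]
  exact ((hf.differentiableOn_iteratedDerivWithin hk hs) x
    (mem_of_mem_nhds hx)).hasDerivWithinAt.hasDerivAt hx

theorem abs_integral_mul_le_of_sign {w g : ℝ → ℝ} {a b σ M : ℝ} (hab : a ≤ b) (hσ : |σ| = 1)
    (hw : ContinuousOn w (Icc a b)) (hg : ContinuousOn g (Icc a b))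
    (hsign : ∀ x ∈ Icc a b, 0 ≤ σ * w x) (hM : ∀ x ∈ Icc a b, |g x| ≤ M) :
    |∫ x in a..b, w x * g x| ≤ M * |∫ x in a..b, w x| := by
  have hσw : 0 ≤ ∫ x in a..b, σ * w x := intervalIntegral.integral_nonneg hab hsign
  calc |∫ x in a..b, w x * g x| = |∫ x in a..b, σ * (w x * g x)| := by
        rw [intervalIntegral.integral_const_mul, abs_mul, hσ, one_mul]
    _ ≤ ∫ x in a..b, |σ * (w x * g x)| := abs_integral_le_integral_abs hab
    _ ≤ ∫ x in a..b, M * (σ * w x) := by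
        refine integral_mono_on hab ?_ ?_ fun x hx => ?_
        · exact ((continuousOn_const.mul (hw.mul hg)).abs).intervalIntegrable_of_Icc hab
        · exact (continuousOn_const.mul (continuousOn_const.mul hw)).intervalIntegrable_of_Icc hab
        rw [← mul_assoc, abs_mul, abs_of_nonneg (hsign x hx), mul_comm M]
        exact mul_le_mul_of_nonneg_left (hM x hx) (hsign x hx)
    _ = M * |∫ x in a..b, w x| := by
        rw [intervalIntegral.integral_const_mul, ← abs_of_nonneg hσw,
          intervalIntegral.integral_const_mul, abs_mul, hσ, one_mul]

noncomputable def eulerMaclaurinQuadrature (m : ℕ) (h : ℝ) (f : ℝ → ℝ) : ℝ :=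
  h / 2 * (f 0 + f h) -
    ∑ l ∈ Finset.Icc 1 m,
      (bernoulli (2 * l) : ℝ) / (2 * l)! * h ^ (2 * l) *
        (iteratedDerivWithin (2 * l - 1) f (Icc 0 h) h -
          iteratedDerivWithin (2 * l - 1) f (Icc 0 h) 0)

section Remainder

variable {h : ℝ} {f : ℝ → ℝ} {n : ℕ}

theorem integral_scaledBernoulli_mul_iteratedDerivWithin_succ (hh : 0 < h)
    (hf : ContDiffOn ℝ n f (Icc 0 h)) {k : ℕ} (hk : k < n) :
    ∫ x in 0..h, scaledBernoulli h (k + 1) x * iteratedDerivWithin (k + 1) f (Icc 0 h) x =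
      scaledBernoulli h (k + 1) h * iteratedDerivWithin k f (Icc 0 h) h -
        scaledBernoulli h (k + 1) 0 * iteratedDerivWithin k f (Icc 0 h) 0 -
          ∫ x in 0..h, scaledBernoulli h k x * iteratedDerivWithin k f (Icc 0 h) x :=
  integral_scaledBernoulli_succ_mul_deriv hh
    (hf.continuousOn_iteratedDerivWithin (by exact_mod_cast hk.le) (uniqueDiffOn_Icc hh))
    (hf.continuousOn_iteratedDerivWithin (by exact_mod_cast hk) (uniqueDiffOn_Icc hh))
    (fun _ hx => hf.hasDerivAt_iteratedDerivWithin (uniqueDiffOn_Icc hh) (by exact_mod_cast hk)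
      (Icc_mem_nhds hx.1 hx.2)) k

theorem integral_sub_eulerMaclaurinQuadrature_eq_neg (hh : 0 < h)
    (hf : ContDiffOn ℝ n f (Icc 0 h)) {j : ℕ} (hj : 2 * j + 1 ≤ n) :
    (∫ x in 0..h, f x) - eulerMaclaurinQuadrature j h f =
      -∫ x in 0..h, scaledBernoulli h (2 * j + 1) x *
        iteratedDerivWithin (2 * j + 1) f (Icc 0 h) x := by
  induction j with
  | zero =>
    have trapezoid := integral_scaledBernoulli_mul_iteratedDerivWithin_succ hh hf (k := 0) hj
    simp only [zero_add, scaledBernoulli_one_apply_self hh.ne', scaledBernoulli_one_apply_zero,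
      scaledBernoulli_zero, iteratedDerivWithin_zero, one_mul] at trapezoid
    simp only [eulerMaclaurinQuadrature, Finset.Icc_eq_empty_of_lt zero_lt_one,
      Finset.sum_empty, sub_zero, mul_zero, zero_add, trapezoid]
    ring
  | succ j ih =>
    have even := integral_scaledBernoulli_mul_iteratedDerivWithin_succ hh hf
      (k := 2 * j + 1) (by omega)
    have odd := integral_scaledBernoulli_mul_iteratedDerivWithin_succ hh hf
      (k := 2 * j + 2) (by omega)
    rw [show 2 * j + 1 + 1 = 2 * j + 2 by ring, scaledBernoulli_apply_self hh.ne' (by omega),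
      scaledBernoulli_apply_zero] at even
    rw [scaledBernoulli_apply_self hh.ne' (by omega),
      scaledBernoulli_apply_zero_of_odd (by exact ⟨j + 1, by ring⟩) (by omega)] at odd
    have hsum : eulerMaclaurinQuadrature (j + 1) h f = eulerMaclaurinQuadrature j h f -
        (bernoulli (2 * j + 2) : ℝ) / (2 * j + 2)! * h ^ (2 * j + 2) *
          (iteratedDerivWithin (2 * j + 1) f (Icc 0 h) h -
            iteratedDerivWithin (2 * j + 1) f (Icc 0 h) 0) := by
      rw [eulerMaclaurinQuadrature, eulerMaclaurinQuadrature,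
        Finset.sum_Icc_succ_top (by omega : 1 ≤ j + 1), show 2 * (j + 1) - 1 = 2 * j + 1 by omega,
        show 2 * (j + 1) = 2 * j + 2 by ring]
      ring
    rw [show 2 * (j + 1) + 1 = 2 * j + 2 + 1 by ring, odd, even, hsum]
    linear_combination ih (by omega)

theorem integral_sub_eulerMaclaurinQuadrature {m : ℕ} (hh : 0 < h)
    (hf : ContDiffOn ℝ (2 * m + 2 : ℕ) f (Icc 0 h)) :
    (∫ x in 0..h, f x) - eulerMaclaurinQuadrature m h f =
      ∫ x in 0..h, (scaledBernoulli h (2 * m + 2) x - scaledBernoulli h (2 * m + 2) 0) *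
        iteratedDerivWithin (2 * m + 2) f (Icc 0 h) x := by
  have hD := hf.continuousOn_iteratedDerivWithin le_rfl (uniqueDiffOn_Icc hh)
  have ftc : ∫ x in 0..h, iteratedDerivWithin (2 * m + 2) f (Icc 0 h) x =
      iteratedDerivWithin (2 * m + 1) f (Icc 0 h) h -
        iteratedDerivWithin (2 * m + 1) f (Icc 0 h) 0 :=
    integral_eq_sub_of_hasDerivAt_of_le hh.le
      (hf.continuousOn_iteratedDerivWithin (by norm_cast; omega) (uniqueDiffOn_Icc hh))
      (fun _ hx => hf.hasDerivAt_iteratedDerivWithin (uniqueDiffOn_Icc hh)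
        (by norm_cast; omega) (Icc_mem_nhds hx.1 hx.2))
      (hD.intervalIntegrable_of_Icc hh.le)
  have last := integral_scaledBernoulli_mul_iteratedDerivWithin_succ hh hf (k := 2 * m + 1)
    (by omega)
  rw [scaledBernoulli_apply_self hh.ne' (by omega)] at last
  simp only [sub_mul]
  rw [intervalIntegral.integral_sub, intervalIntegral.integral_const_mul, ftc, last,
    integral_sub_eulerMaclaurinQuadrature_eq_neg hh hf (by omega)]
  · ring
  · exact ((continuous_scaledBernoulli h _).continuousOn.mul hD).intervalIntegrable_of_Icc hh.le
  · exact (continuousOn_const.mul hD).intervalIntegrable_of_Icc hh.le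

end Remainder

theorem euler_maclaurin_single_interval_error_general
    (m : ℕ) (h : ℝ) (hh : 0 < h)
    (f : ℝ → ℝ) (hf : ContDiffOn ℝ ((2 * m + 2 : ℕ) : ℕ∞) f (Set.Icc 0 h)) :
    |(∫ x in (0:ℝ)..h, f x) -
        (h / 2 * (f 0 + f h) -
          ∑ l ∈ Finset.Icc 1 m,
            (bernoulli (2 * l) : ℝ) / (Nat.factorial (2 * l)) * h ^ (2 * l) *
              (iteratedDerivWithin (2 * l - 1) f (Set.Icc 0 h) h -
                iteratedDerivWithin (2 * l - 1) f (Set.Icc 0 h) 0))| ≤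
      |(bernoulli (2 * m + 2) : ℝ)| / (Nat.factorial (2 * m + 2)) * h ^ (2 * m + 3) *
        sSup ((fun x => |iteratedDerivWithin (2 * m + 2) f (Set.Icc 0 h) x|) '' Set.Icc 0 h) := by
  set D := iteratedDerivWithin (2 * m + 2) f (Icc 0 h)
  have hD : ContinuousOn D (Icc 0 h) :=
    hf.continuousOn_iteratedDerivWithin le_rfl (uniqueDiffOn_Icc hh)
  have hbound : ∀ x ∈ Icc 0 h, |D x| ≤ sSup ((fun x => |D x|) '' Icc 0 h) := fun x hx =>
    le_csSup (isCompact_Icc.bddAbove_image hD.abs) (mem_image_of_mem _ hx)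
  change |(∫ x in 0..h, f x) - eulerMaclaurinQuadrature m h f| ≤ _
  rw [integral_sub_eulerMaclaurinQuadrature hh hf]
  refine (abs_integral_mul_le_of_sign
    (w := fun x => scaledBernoulli h (2 * m + 2) x - scaledBernoulli h (2 * m + 2) 0)
    hh.le (by simp : |(-1 : ℝ) ^ (m + 1)| = 1)
    ((continuous_scaledBernoulli h _).sub continuous_const).continuousOn hD
    (fun x hx => neg_one_pow_mul_scaledBernoulli_sub_apply_zero_nonneg hh m.succ_ne_zero hx)
    hbound).trans_eq ?_
  rw [integral_scaledBernoulli_sub_apply_zero hh.ne' (by omega), scaledBernoulli_apply_zero,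
    abs_neg, abs_mul, abs_mul, abs_of_pos hh, abs_of_nonneg (by positivity)]
  ring

/-- **Error bound for the single-interval Euler–Maclaurin quadrature.**
For `m ≥ 1`, `h > 0` and `f` a `(2m+2)`-times continuously differentiable function on `[0, h]`,
the quadrature `K(f) = (h/2)(f 0 + f h) - ∑_{l=1}^m (B_{2l}/(2l)!) h^{2l} (f^{(2l-1)}(h) -
f^{(2l-1)}(0))` satisfies
`|∫_0^h f - K(f)| ≤ (|B_{2m+2}|/(2m+2)!) h^{2m+3} sup_{x ∈ [0,h]} |f^{(2m+2)}(x)|`. -/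
theorem euler_maclaurin_single_interval_error
    (m : ℕ) (hm : 1 ≤ m) (h : ℝ) (hh : 0 < h)
    (f : ℝ → ℝ) (hf : ContDiffOn ℝ ((2 * m + 2 : ℕ) : ℕ∞) f (Set.Icc 0 h)) :
    |(∫ x in (0:ℝ)..h, f x) -
        (h / 2 * (f 0 + f h) -
          ∑ l ∈ Finset.Icc 1 m,
            (bernoulli (2 * l) : ℝ) / (Nat.factorial (2 * l)) * h ^ (2 * l) *
              (iteratedDerivWithin (2 * l - 1) f (Set.Icc 0 h) h -
                iteratedDerivWithin (2 * l - 1) f (Set.Icc 0 h) 0))| ≤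
      |(bernoulli (2 * m + 2) : ℝ)| / (Nat.factorial (2 * m + 2)) * h ^ (2 * m + 3) *
        sSup ((fun x => |iteratedDerivWithin (2 * m + 2) f (Set.Icc 0 h) x|) '' Set.Icc 0 h) :=
  euler_maclaurin_single_interval_error_general m h hh f hf
end

section
/- Let n ≥ 2 be an integer, h > 0, and let f : ℝ → ℝ be of class C^{n−2} with all derivatives of order 0 through n−2 bounded in absolute value by M on ℝ. Let F_j (2 ≤ j ≤ n) be the prolongation functions of f. Let q : [0,h] → ℝ be an n-times continuously differentiable solution of q̈(t) = f(q(t)), let q_d : ℝ → ℝ be a polynomial, and let τ ∈ {0, h} be such that q_d(τ) = q(τ) and the prolongation-collocation conditions q_d^{(j)}(τ) = F_j(q_d(τ), q̇_d(τ)) hold for all j = 2, …, n. Let R > 0 be such that |q̇(τ)| ≤ R and |q̇_d(τ)| ≤ R. Then there exists a constant C > 0 depending only on n, M, and R such that |q_d^{(j)}(τ) − q^{(j)}(τ)| ≤ C |q̇_d(τ) − q̇(τ)| for every j = 2, …, n. In particular, if q̇_d(τ) = q̇(τ) + O(h^p) then q_d^{(j)}(τ) = q^{(j)}(τ) + O(h^p)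 for all j = 2, …, n. -/
/-- The prolongation functions of `f : ℝ → ℝ`: `prolong f k` represents `F_{k+2}`, defined
recursively by `F_2 (x, v) = f x` and
`F_{j+1} (x, v) = v ∂F_j/∂x (x, v) + f x ∂F_j/∂v (x, v)`. -/
noncomputable def prolong (f : ℝ → ℝ) : ℕ → ℝ → ℝ → ℝ
  | 0, x, _ => f x
  | (k + 1), x, v =>
      v * deriv (fun y => prolong f k y v) x + f x * deriv (fun w => prolong f k x w) v

/-!
`F_{k+2}(x, v)` is a fixed polynomial expression in `v` and `f(x), f'(x), …, f^{(k)}(x)`,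
independent of `f`. Along a solution, `q^{(j)}(t) = F_j(q(t), q̇(t))` by the chain rule, while
the collocation conditions give `q_d^{(j)}(τ) = F_j(q(τ), q̇_d(τ))`. Both sides share the first
argument, so their difference is controlled by the mean value theorem in `v` and a bound on
`∂F_j/∂v` over `|v| ≤ R` that only depends on `M` and `R`.
-/

/-- Formal expressions in a velocity variable `v` and the derivatives `f^{(i)}(x)`. -/
inductive DiffExpr where
  | vel : DiffExpr
  | fDeriv : ℕ → DiffExpr
  | const : ℝ → DiffExpr
  | add : DiffExpr → DiffExpr → DiffExpr
  | mul : DiffExpr → DiffExpr → DiffExpr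

namespace DiffExpr

/-- `g i` is the value substituted for `f^{(i)}(x)`, and `v` the one for the velocity. -/
def eval (g : ℕ → ℝ) (v : ℝ) : DiffExpr → ℝ
  | vel => v
  | fDeriv i => g i
  | const c => c
  | add a b => a.eval g v + b.eval g v
  | mul a b => a.eval g v * b.eval g v

def order : DiffExpr → ℕ
  | vel => 0
  | fDeriv i => i
  | const _ => 0
  | add a b => max a.order b.order
  | mul a b => max a.order b.order

def derivX : DiffExpr → DiffExpr
  | vel => const 0
  | fDeriv i => fDeriv (i + 1)
  | const _ => const 0
  | add a b => add a.derivX b.derivX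
  | mul a b => add (mul a.derivX b) (mul a b.derivX)

def derivV : DiffExpr → DiffExpr
  | vel => const 1
  | fDeriv _ => const 0
  | const _ => const 0
  | add a b => add a.derivV b.derivV
  | mul a b => add (mul a.derivV b) (mul a b.derivV)

def bound (M R : ℝ) : DiffExpr → ℝ
  | vel => |R|
  | fDeriv _ => |M|
  | const c => |c|
  | add a b => a.bound M R + b.bound M R
  | mul a b => a.bound M R * b.bound M R

theorem order_derivX_le (e : DiffExpr) : e.derivX.order ≤ e.order + 1 := by
  induction e <;> simp only [derivX, order] <;> omega

theorem order_derivV_le (e : DiffExpr) : e.derivV.order ≤ e.order := by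
  induction e <;> simp only [derivV, order] <;> omega

theorem bound_nonneg (M R : ℝ) (e : DiffExpr) : 0 ≤ e.bound M R := by
  induction e with
  | add a b iha ihb => exact add_nonneg iha ihb
  | mul a b iha ihb => exact mul_nonneg iha ihb
  | _ => exact abs_nonneg _

theorem abs_eval_le_bound {M R v : ℝ} {g : ℕ → ℝ} {e : DiffExpr}
    (hg : ∀ i ≤ e.order, |g i| ≤ M) (hv : |v| ≤ R) : |e.eval g v| ≤ e.bound M R := by
  induction e with
  | vel => exact hv.trans (le_abs_self R)
  | fDeriv i => exact (hg i le_rfl).trans (le_abs_self M)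
  | const c => exact le_rfl
  | add a b iha ihb =>
    exact (abs_add_le _ _).trans <| add_le_add
      (iha fun i hi => hg i (hi.trans (le_max_left _ _)))
      (ihb fun i hi => hg i (hi.trans (le_max_right _ _)))
  | mul a b iha ihb =>
    rw [eval, abs_mul]
    exact mul_le_mul (iha fun i hi => hg i (hi.trans (le_max_left _ _)))
      (ihb fun i hi => hg i (hi.trans (le_max_right _ _))) (abs_nonneg _) (bound_nonneg M R a)

theorem hasDerivAt_eval_vel (g : ℕ → ℝ) (e : DiffExpr) (v : ℝ) :
    HasDerivAt (fun w => e.eval g w) (e.derivV.eval g v) v := by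
  induction e with
  | vel => exact hasDerivAt_id' v
  | fDeriv i => exact hasDerivAt_const v (g i)
  | const c => exact hasDerivAt_const v c
  | add a b iha ihb => exact iha.add ihb
  | mul a b iha ihb => exact iha.mul ihb

theorem abs_eval_sub_eval_le {M R v w : ℝ} {g : ℕ → ℝ} {e : DiffExpr}
    (hg : ∀ i ≤ e.order, |g i| ≤ M) (hv : |v| ≤ R) (hw : |w| ≤ R) :
    |e.eval g v - e.eval g w| ≤ e.derivV.bound M R * |v - w| := by
  simpa only [Real.norm_eq_abs] using (convex_Icc (-R) R).norm_image_sub_le_of_norm_hasDerivWithin_le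
    (fun u _ => (hasDerivAt_eval_vel g e u).hasDerivWithinAt)
    (fun u hu => abs_eval_le_bound (fun i hi => hg i (hi.trans e.order_derivV_le)) (abs_le.mpr hu))
    (abs_le.mp hw) (abs_le.mp hv)

theorem hasDerivWithinAt_eval_comp {m : ℕ} {f : ℝ → ℝ} (hf : ContDiff ℝ (m : ℕ∞) f)
    {e : DiffExpr} (he : e.order < m) {u w : ℝ → ℝ} {u' w' : ℝ} {s : Set ℝ} {t : ℝ}
    (hu : HasDerivWithinAt u u' s t) (hw : HasDerivWithinAt w w' s t) :
    HasDerivWithinAt (fun r => e.eval (fun i => iteratedDeriv i f (u r)) (w r))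
      (e.derivX.eval (fun i => iteratedDeriv i f (u t)) (w t) * u' +
        e.derivV.eval (fun i => iteratedDeriv i f (u t)) (w t) * w') s t := by
  induction e with
  | vel => simpa [eval, derivX, derivV] using hw
  | fDeriv i =>
    have hfi : HasDerivAt (iteratedDeriv i f) (iteratedDeriv (i + 1) f (u t)) (u t) := by
      rw [iteratedDeriv_succ]
      exact (hf.differentiable_iteratedDeriv i (by exact_mod_cast he)).differentiableAt.hasDerivAt
    simp only [eval, derivX, derivV, zero_mul, add_zero]
    exact hfi.comp_hasDerivWithinAt t hu
  | const c => simpa [eval, derivX, derivV] using hasDerivWithinAt_const t s c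
  | add a b iha ihb =>
    simp only [order] at he
    simp only [eval, derivX, derivV]
    exact ((iha (by omega)).add (ihb (by omega))).congr_deriv (by ring)
  | mul a b iha ihb =>
    simp only [order] at he
    simp only [eval, derivX, derivV]
    exact ((iha (by omega)).mul (ihb (by omega))).congr_deriv (by ring)

end DiffExpr

open DiffExpr

def prolongExpr : ℕ → DiffExpr
  | 0 => fDeriv 0
  | k + 1 => add (mul vel (prolongExpr k).derivX) (mul (fDeriv 0) (prolongExpr k).derivV)

theorem order_prolongExpr_le (k : ℕ) : (prolongExpr k).order ≤ k := by
  induction k with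
  | zero => simp [prolongExpr, order]
  | succ k ih =>
    have := (prolongExpr k).order_derivX_le
    have := (prolongExpr k).order_derivV_le
    simp only [prolongExpr, order]
    omega

theorem prolong_eq_eval {m : ℕ} {f : ℝ → ℝ} (hf : ContDiff ℝ (m : ℕ∞) f) {k : ℕ} (hk : k ≤ m)
    (x v : ℝ) : prolong f k x v = (prolongExpr k).eval (fun i => iteratedDeriv i f x) v := by
  induction k generalizing x v with
  | zero => simp [prolong, prolongExpr, eval]
  | succ k ih =>
    have hord : (prolongExpr k).order < m := (order_prolongExpr_le k).trans_lt hk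
    have hx : HasDerivAt (fun y => prolong f k y v)
        ((prolongExpr k).derivX.eval (fun i => iteratedDeriv i f x) v) x := by
      simp only [ih (by omega) _ v]
      simpa [hasDerivWithinAt_univ] using hasDerivWithinAt_eval_comp hf hord
        (hasDerivWithinAt_id x Set.univ) (hasDerivWithinAt_const x Set.univ v)
    have hv : HasDerivAt (fun w => prolong f k x w)
        ((prolongExpr k).derivV.eval (fun i => iteratedDeriv i f x) v) v := by
      simp only [ih (by omega) x]
      exact hasDerivAt_eval_vel _ _ v
    simp [prolong, hx.deriv, hv.deriv, prolongExpr, eval]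

theorem iteratedDerivWithin_eq_eval {n : ℕ} {f q : ℝ → ℝ} {s : Set ℝ} (hs : UniqueDiffOn ℝ s)
    (hf : ContDiff ℝ ((n - 2 : ℕ) : ℕ∞) f) (hq : ContDiffOn ℝ (n : ℕ∞) q s)
    (hode : ∀ t ∈ s, iteratedDerivWithin 2 q s t = f (q t)) {k : ℕ} (hk : k + 2 ≤ n)
    {t : ℝ} (ht : t ∈ s) :
    iteratedDerivWithin (k + 2) q s t =
      (prolongExpr k).eval (fun i => iteratedDeriv i f (q t)) (iteratedDerivWithin 1 q s t) := by
  induction k generalizing t with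
  | zero => simpa [prolongExpr, eval] using hode t ht
  | succ k ih =>
    have hord : (prolongExpr k).order < n - 2 := (order_prolongExpr_le k).trans_lt (by omega)
    have hq' : HasDerivWithinAt q (iteratedDerivWithin 1 q s t) s t := by
      rw [iteratedDerivWithin_one]
      exact (hq.differentiableOn (by exact_mod_cast (by omega : n ≠ 0)) t ht).hasDerivWithinAt
    have hq'' : HasDerivWithinAt (iteratedDerivWithin 1 q s) (f (q t)) s t := by
      have := (hq.differentiableOn_iteratedDerivWithin (by exact_mod_cast (by omega : 1 < n)) hs
        t ht).hasDerivWithinAt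
      rwa [← iteratedDerivWithin_succ, hode t ht] at this
    have hderiv := (hasDerivWithinAt_eval_comp hf hord hq' hq'').congr
      (fun r hr => ih (by omega) hr) (ih (by omega) ht)
    rw [iteratedDerivWithin_succ, hderiv.derivWithin (hs t ht)]
    simp only [prolongExpr, eval, iteratedDeriv_zero]
    ring

theorem prolongation_collocation_lipschitz_general
    (n : ℕ) (M R : ℝ) :
    ∃ C > 0,
      ∀ h : ℝ, 0 < h →
      ∀ f : ℝ → ℝ, ContDiff ℝ ((n - 2 : ℕ) : ℕ∞) f →
        (∀ i ≤ n - 2, ∀ x : ℝ, |iteratedDeriv i f x| ≤ M) →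
      ∀ q : ℝ → ℝ, ContDiffOn ℝ (n : ℕ∞) q (Set.Icc 0 h) →
        (∀ t ∈ Set.Icc (0 : ℝ) h, iteratedDerivWithin 2 q (Set.Icc 0 h) t = f (q t)) →
      ∀ qd : Polynomial ℝ, ∀ τ ∈ ({0, h} : Set ℝ),
        qd.eval τ = q τ →
        (∀ j : ℕ, 2 ≤ j → j ≤ n →
          (Polynomial.derivative^[j] qd).eval τ =
            prolong f (j - 2) (qd.eval τ) ((Polynomial.derivative qd).eval τ)) →
        |iteratedDerivWithin 1 q (Set.Icc 0 h) τ| ≤ R →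
        |(Polynomial.derivative qd).eval τ| ≤ R →
        ∀ j : ℕ, 2 ≤ j → j ≤ n →
          |(Polynomial.derivative^[j] qd).eval τ - iteratedDerivWithin j q (Set.Icc 0 h) τ| ≤
            C * |(Polynomial.derivative qd).eval τ - iteratedDerivWithin 1 q (Set.Icc 0 h) τ| := by
  have hbound : ∀ k, 0 ≤ (prolongExpr k).derivV.bound M R := fun k => bound_nonneg M R _
  refine ⟨∑ k ∈ Finset.range (n - 1), (prolongExpr k).derivV.bound M R + 1,
    add_pos_of_nonneg_of_pos (Finset.sum_nonneg fun k _ => hbound k) one_pos, ?_⟩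
  intro h hh f hf hfM q hq hode qd τ hτ hval hcol hqR hqdR j hj2 hjn
  obtain ⟨k, rfl⟩ : ∃ k, j = k + 2 := ⟨j - 2, by omega⟩
  have hτs : τ ∈ Set.Icc 0 h := by
    rcases hτ with rfl | rfl
    exacts [Set.left_mem_Icc.mpr hh.le, Set.right_mem_Icc.mpr hh.le]
  rw [hcol _ hj2 hjn, hval, Nat.add_sub_cancel, prolong_eq_eval hf (by omega),
    iteratedDerivWithin_eq_eval (uniqueDiffOn_Icc hh) hf hq hode hjn hτs]
  refine (abs_eval_sub_eval_le (fun i hi => hfM i ?_ _) hqdR hqR).trans ?_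
  · exact hi.trans ((order_prolongExpr_le k).trans (by omega))
  · gcongr
    exact (Finset.single_le_sum (fun k _ => hbound k)
      (Finset.mem_range.mpr (by omega))).trans (le_add_of_nonneg_right zero_le_one)

/-- **Lipschitz estimate for endpoint derivatives of prolongation-collocation polynomials.**
Let `n ≥ 2`, `f` of class `C^{n-2}` with derivatives of orders `0, …, n-2` bounded by `M`, and
`R > 0`.  There is a constant `C > 0`, depending only on `n`, `M`, `R`, such that for every
`h > 0`, every `n`-times continuously differentiable solution `q` of `q̈ = f(q)` on `[0, h]`,
every polynomial `q_d` and every endpoint `τ ∈ {0, h}` with `q_d(τ) = q(τ)` satisfying the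
prolongation-collocation conditions `q_d^{(j)}(τ) = F_j(q_d(τ), q̇_d(τ))` for `j = 2, …, n`,
and with `|q̇(τ)| ≤ R`, `|q̇_d(τ)| ≤ R`, one has
`|q_d^{(j)}(τ) - q^{(j)}(τ)| ≤ C |q̇_d(τ) - q̇(τ)|` for all `j = 2, …, n`. -/
theorem prolongation_collocation_lipschitz
    (n : ℕ) (hn : 2 ≤ n) (M R : ℝ) (hR : 0 < R) :
    ∃ C > 0,
      ∀ h : ℝ, 0 < h →
      ∀ f : ℝ → ℝ, ContDiff ℝ ((n - 2 : ℕ) : ℕ∞) f →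
        (∀ i ≤ n - 2, ∀ x : ℝ, |iteratedDeriv i f x| ≤ M) →
      ∀ q : ℝ → ℝ, ContDiffOn ℝ (n : ℕ∞) q (Set.Icc 0 h) →
        (∀ t ∈ Set.Icc (0 : ℝ) h, iteratedDerivWithin 2 q (Set.Icc 0 h) t = f (q t)) →
      ∀ qd : Polynomial ℝ, ∀ τ ∈ ({0, h} : Set ℝ),
        qd.eval τ = q τ →
        (∀ j : ℕ, 2 ≤ j → j ≤ n →
          (Polynomial.derivative^[j] qd).eval τ =
            prolong f (j - 2) (qd.eval τ) ((Polynomial.derivative qd).eval τ)) →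
        |iteratedDerivWithin 1 q (Set.Icc 0 h) τ| ≤ R →
        |(Polynomial.derivative qd).eval τ| ≤ R →
        ∀ j : ℕ, 2 ≤ j → j ≤ n →
          |(Polynomial.derivative^[j] qd).eval τ - iteratedDerivWithin j q (Set.Icc 0 h) τ| ≤
            C * |(Polynomial.derivative qd).eval τ - iteratedDerivWithin 1 q (Set.Icc 0 h) τ| :=
  prolongation_collocation_lipschitz_general n M R
end

section
/- Let n ≥ 2 be an integer, h > 0, and 1 ≤ j ≤ n−1. Then ∫_0^h H_{n,j}(t) dt = ∫_0^h H_{n,j}(h−t) dt = c_{n,j} h^{j+1}, where c_{n,j} = ∫_0^1 (u^j/j!)(1−u)^n ∑_{s=0}^{n−j−1} binom(n+s−1, s) u^s du is a strictly positive constant independent of h. -/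
/-- The two-point Hermite basis function
`H_{n,j}(t) = (t^j/j!) (1 - t/h)^n ∑_{s=0}^{n-j-1} C(n+s-1, s) (t/h)^s` on `[0, h]`. -/
noncomputable def hermiteBasis (n j : ℕ) (h t : ℝ) : ℝ :=
  t ^ j / (Nat.factorial j) * (1 - t / h) ^ n *
    ∑ s ∈ Finset.range (n - j), ((n + s - 1).choose s : ℝ) * (t / h) ^ s

/-- The constant `c_{n,j} = ∫_0^1 (u^j/j!)(1-u)^n ∑_{s=0}^{n-j-1} C(n+s-1, s) u^s du`. -/
noncomputable def hermiteBasisConst (n j : ℕ) : ℝ :=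
  ∫ u in (0:ℝ)..1,
    u ^ j / (Nat.factorial j) * (1 - u) ^ n *
      ∑ s ∈ Finset.range (n - j), ((n + s - 1).choose s : ℝ) * u ^ s

/-! Substituting `t = h u` turns `H_{n,j}(t)` into `h ^ j H_{n,j}(u)` taken at `h = 1`, so the integral
over `[0, h]` is `h ^ (j + 1)` times the integral over `[0, 1]`, which is `c_{n,j}`. The reflection
`t ↦ h - t` preserves `[0, h]`, and `c_{n,j} > 0` because `H_{n,j}` is positive on `(0, 1)`: every
factor is, and the sum contains the term `s = 0`, equal to `1`, as soon as `j < n`. -/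

theorem continuous_hermiteBasis (n j : ℕ) (h : ℝ) : Continuous (hermiteBasis n j h) := by
  unfold hermiteBasis
  fun_prop

theorem hermiteBasis_pos {n j : ℕ} (hjn : j < n) {h t : ℝ} (ht0 : 0 < t) (hth : t < h) :
    0 < hermiteBasis n j h t := by
  have hh : 0 < h := ht0.trans hth
  have hsum : 0 < ∑ s ∈ Finset.range (n - j), ((n + s - 1).choose s : ℝ) * (t / h) ^ s :=
    Finset.sum_pos' (fun s _ => by positivity)
      ⟨0, Finset.mem_range.2 (Nat.sub_pos_of_lt hjn), by simp⟩
  have hfactor : 0 < 1 - t / h := by rw [sub_pos, div_lt_one hh]; exact hth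
  unfold hermiteBasis
  positivity

theorem hermiteBasisConst_eq_integral (n j : ℕ) :
    hermiteBasisConst n j = ∫ u in (0:ℝ)..1, hermiteBasis n j 1 u := by
  simp only [hermiteBasisConst, hermiteBasis, div_one]

theorem hermiteBasisConst_pos {n j : ℕ} (hjn : j < n) : 0 < hermiteBasisConst n j := by
  rw [hermiteBasisConst_eq_integral]
  exact intervalIntegral.intervalIntegral_pos_of_pos_on
    ((continuous_hermiteBasis n j 1).intervalIntegrable _ _)
    (fun u hu => hermiteBasis_pos hjn hu.1 hu.2) zero_lt_one

theorem hermiteBasis_eq_pow_mul (n j : ℕ) {h : ℝ} (hh : h ≠ 0) (t : ℝ) :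
    hermiteBasis n j h t = h ^ j * hermiteBasis n j 1 (t / h) := by
  simp only [hermiteBasis, div_one, div_pow]
  field_simp

theorem integral_hermiteBasis_eq (n j : ℕ) {h : ℝ} (hh : h ≠ 0) :
    ∫ t in (0:ℝ)..h, hermiteBasis n j h t = hermiteBasisConst n j * h ^ (j + 1) := by
  simp only [hermiteBasis_eq_pow_mul n j hh]
  rw [intervalIntegral.integral_const_mul, intervalIntegral.integral_comp_div _ hh, zero_div,
    div_self hh, ← hermiteBasisConst_eq_integral, smul_eq_mul]
  ring

theorem integral_hermiteBasis_general
    (n j : ℕ) (hn : 2 ≤ n) (hj2 : j ≤ n - 1) (h : ℝ) (hh : 0 < h) :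
    0 < hermiteBasisConst n j ∧
    (∫ t in (0:ℝ)..h, hermiteBasis n j h t) = hermiteBasisConst n j * h ^ (j + 1) ∧
    (∫ t in (0:ℝ)..h, hermiteBasis n j h (h - t)) = hermiteBasisConst n j * h ^ (j + 1) := by
  have hint := integral_hermiteBasis_eq n j hh.ne'
  refine ⟨hermiteBasisConst_pos (by omega), hint, ?_⟩
  rw [intervalIntegral.integral_comp_sub_left (hermiteBasis n j h) h, sub_self, sub_zero, hint]

/-- **Integral of the two-point Hermite basis functions.**
For `n ≥ 2`, `1 ≤ j ≤ n - 1` and `h > 0`,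
`∫_0^h H_{n,j}(t) dt = ∫_0^h H_{n,j}(h - t) dt = c_{n,j} h^{j+1}` where `c_{n,j} > 0` is
independent of `h`. -/
theorem integral_hermiteBasis
    (n j : ℕ) (hn : 2 ≤ n) (hj1 : 1 ≤ j) (hj2 : j ≤ n - 1) (h : ℝ) (hh : 0 < h) :
    0 < hermiteBasisConst n j ∧
    (∫ t in (0:ℝ)..h, hermiteBasis n j h t) = hermiteBasisConst n j * h ^ (j + 1) ∧
    (∫ t in (0:ℝ)..h, hermiteBasis n j h (h - t)) = hermiteBasisConst n j * h ^ (j + 1) :=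
  integral_hermiteBasis_general n j hn hj2 h hh
end

section
/- Let n ≥ 2 be an integer, 0 < h ≤ 1, and let q : [0,h] → ℝ be 2n-times continuously differentiable with |q^{(2n)}(t)| ≤ M for all t ∈ [0,h]. Let q_d be a real polynomial of degree at most 2n−1 such that q̈_d(0) = q̈(0), q̈_d(h) = q̈(h), and |q_d^{(j+2)}(τ) − q^{(j+2)}(τ)| ≤ δ for all j = 1, …, n−2 and τ ∈ {0, h}. Then there exists a constant C > 0 depending only on n such that | (q̇(h) − q̇_d(h)) − (q̇(0) − q̇_d(0)) | ≤ C ( δ h² + M h^{2n−1} ). -/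
/-!
Write `D k = q^{(k)} - q_d^{(k)}`, `m = 2n - 2`, and let `P(t) = t^{n-1} (t - h)^{n-1}`, the
Peano kernel of two-point Hermite interpolation. Since `deg P = m`, integrating `P^{(m+1)} D₁ = 0`
by parts `m + 1` times gives
  `m! (D₁(h) - D₁(0)) = ∫₀ʰ P D_{2n} - [∑_{i<m} (-1)^{i+1} P^{(m-1-i)} D_{i+2}]₀ʰ`.
At `τ ∈ {0, h}` we have `D₂(τ) = 0` and `P^{(j)}(τ) = 0` for `j < n - 1`; every other boundary term
is a product of some `|D_{i+2}(τ)| ≤ δ` with `|P^{(m-1-i)}(τ)| = O(h^{i+1}) = O(h²)`, while the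
integral is `O(M h^{m+1})`. The bound `|P^{(j)}| ≤ K h^{m-j}` on `[0, h]` follows by rescaling the
case `h = 1`.
-/

open Polynomial Set intervalIntegral

namespace Polynomial

variable {R : Type*} [CommRing R]

theorem iterate_derivative_comp_C_mul_X (p : R[X]) (c : R) (j : ℕ) :
    derivative^[j] (p.comp (C c * X)) = C (c ^ j) * (derivative^[j] p).comp (C c * X) := by
  induction j with
  | zero => simp
  | succ j ih =>
    rw [Function.iterate_succ_apply', ih, derivative_C_mul, derivative_comp, derivative_C_mul_X,
      Function.iterate_succ_apply', pow_succ, C_mul]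
    ring

theorem eval_iterate_derivative_eq_zero_of_pow_dvd {p : R[X]} {t : R} {e j : ℕ}
    (hp : (X - C t) ^ e ∣ p) (hj : j < e) : (derivative^[j] p).eval t = 0 :=
  dvd_iff_isRoot.mp <| (dvd_pow_self _ (Nat.sub_ne_zero_of_lt hj)).trans
    (pow_sub_dvd_iterate_derivative_of_pow_dvd j hp)

theorem iterate_derivative_natDegree (p : R[X]) :
    derivative^[p.natDegree] p = C (p.natDegree.factorial * p.leadingCoeff) := by
  rw [eq_C_of_natDegree_le_zero ((natDegree_iterate_derivative p _).trans (Nat.sub_self _).le),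
    coeff_iterate_derivative, zero_add, Nat.descFactorial_self, nsmul_eq_mul, leadingCoeff]

theorem exists_abs_eval_iterate_derivative_le (p : ℝ[X]) {s : Set ℝ} (hs : IsCompact s) :
    ∃ K > 0, ∀ j, ∀ t ∈ s, |(derivative^[j] p).eval t| ≤ K := by
  choose K hK using fun j => hs.exists_bound_of_continuousOn (derivative^[j] p).continuousOn
  refine ⟨1 + ∑ j ∈ Finset.range (p.natDegree + 1), |K j|, by positivity, fun j t ht => ?_⟩
  by_cases hj : j ≤ p.natDegree
  · calc |(derivative^[j] p).eval t| ≤ |K j| := (hK j t ht).trans (le_abs_self _)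
      _ ≤ ∑ j ∈ Finset.range (p.natDegree + 1), |K j| :=
        Finset.single_le_sum (fun i _ => abs_nonneg (K i))
          (Finset.mem_range.mpr (Nat.lt_succ_of_le hj))
      _ ≤ _ := le_add_of_nonneg_left zero_le_one
  · rw [iterate_derivative_eq_zero (not_le.mp hj), eval_zero, abs_zero]
    positivity

end Polynomial

noncomputable def hermiteKernel {R : Type*} [CommRing R] (e : ℕ) (h : R) : R[X] :=
  X ^ e * (X - C h) ^ e

section HermiteKernel

variable {R : Type*} [CommRing R] (e : ℕ) (h : R)

theorem monic_hermiteKernel : (hermiteKernel e h).Monic :=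
  (monic_X_pow e).mul ((monic_X_sub_C h).pow e)

theorem natDegree_hermiteKernel [Nontrivial R] : (hermiteKernel e h).natDegree = 2 * e := by
  rw [hermiteKernel, (monic_X_pow e).natDegree_mul ((monic_X_sub_C h).pow e), natDegree_X_pow,
    (monic_X_sub_C h).natDegree_pow, natDegree_X_sub_C]
  ring

variable {e}

theorem eval_iterate_derivative_hermiteKernel_zero {j : ℕ} (hj : j < e) :
    (derivative^[j] (hermiteKernel e h)).eval 0 = 0 :=
  eval_iterate_derivative_eq_zero_of_pow_dvd (by rw [C_0, sub_zero]; exact dvd_mul_right _ _) hj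

theorem eval_iterate_derivative_hermiteKernel_self {j : ℕ} (hj : j < e) :
    (derivative^[j] (hermiteKernel e h)).eval h = 0 :=
  eval_iterate_derivative_eq_zero_of_pow_dvd (dvd_mul_left _ _) hj

end HermiteKernel

theorem hermiteKernel_eq_C_mul_comp {K : Type*} [Field K] (e : ℕ) {h : K} (hh : h ≠ 0) :
    hermiteKernel e h = C (h ^ (2 * e)) * (hermiteKernel e 1).comp (C h⁻¹ * X) := by
  have hX : (X : K[X]) = C h * (C h⁻¹ * X) := by
    rw [← mul_assoc, ← C_mul, mul_inv_cancel₀ hh, C_1, one_mul]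
  have hXh : (X - C h : K[X]) = C h * (C h⁻¹ * X - C 1) := by
    rw [mul_sub, ← hX, ← C_mul, mul_one]
  simp only [hermiteKernel, mul_comp, pow_comp, X_comp, sub_comp, C_comp]
  calc X ^ e * (X - C h) ^ e = (C h * (C h⁻¹ * X)) ^ e * (C h * (C h⁻¹ * X - C 1)) ^ e := by
        rw [← hX, ← hXh]
    _ = _ := by
        rw [mul_pow (C h), mul_pow (C h), two_mul, pow_add, C_mul, C_pow]
        ring

theorem exists_abs_eval_iterate_derivative_hermiteKernel_le (e : ℕ) :
    ∃ K > 0, ∀ h : ℝ, 0 < h → ∀ j ≤ 2 * e, ∀ t ∈ Icc 0 h,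
      |(derivative^[j] (hermiteKernel e h)).eval t| ≤ K * h ^ (2 * e - j) := by
  obtain ⟨K, hK, hbound⟩ :=
    (hermiteKernel e (1 : ℝ)).exists_abs_eval_iterate_derivative_le isCompact_Icc (s := Icc 0 1)
  refine ⟨K, hK, fun h hh j hj t ht => ?_⟩
  have hscaled : h⁻¹ * t ∈ Icc (0 : ℝ) 1 :=
    ⟨by have := ht.1; positivity, inv_mul_le_one_of_le₀ ht.2 hh.le⟩
  have hpow : h ^ (2 * e) * h⁻¹ ^ j = h ^ (2 * e - j) := by
    rw [← Nat.sub_add_cancel hj, pow_add, Nat.add_sub_cancel, inv_pow, mul_assoc,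
      mul_inv_cancel₀ (pow_ne_zero _ hh.ne'), mul_one]
  rw [hermiteKernel_eq_C_mul_comp e hh.ne', iterate_derivative_C_mul,
    iterate_derivative_comp_C_mul_X, eval_mul, eval_C, eval_mul, eval_C, eval_comp, eval_mul,
    eval_C, eval_X, ← mul_assoc, hpow, abs_mul, abs_of_pos (by positivity), mul_comm K]
  exact mul_le_mul_of_nonneg_left (hbound j _ hscaled) (by positivity)

theorem ContDiffOn.hasDerivWithinAt_iteratedDerivWithin {𝕜 F : Type*} [NontriviallyNormedField 𝕜]
    [NormedAddCommGroup F] [NormedSpace 𝕜 F] {f : 𝕜 → F} {s : Set 𝕜} {n : WithTop ℕ∞} {k : ℕ}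
    (hf : ContDiffOn 𝕜 n f s) (hs : UniqueDiffOn 𝕜 s) (hk : k < n) {t : 𝕜} (ht : t ∈ s) :
    HasDerivWithinAt (iteratedDerivWithin k f s) (iteratedDerivWithin (k + 1) f s t) s t := by
  rw [iteratedDerivWithin_succ]
  exact (hf.differentiableOn_iteratedDerivWithin hk hs t ht).hasDerivWithinAt

theorem Polynomial.hasDerivWithinAt_eval_iterate_derivative {𝕜 : Type*} [NontriviallyNormedField 𝕜]
    (p : 𝕜[X]) (k : ℕ) (s : Set 𝕜) (t : 𝕜) :
    HasDerivWithinAt (fun x => (derivative^[k] p).eval x) ((derivative^[k + 1] p).eval t) s t := by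
  rw [Function.iterate_succ_apply']
  exact ((derivative^[k] p).hasDerivAt t).hasDerivWithinAt

theorem integral_eval_iterate_derivative_mul {a b : ℝ} (P : ℝ[X]) (m : ℕ) (g : ℕ → ℝ → ℝ)
    (hg : ∀ k < m, ∀ t ∈ uIcc a b, HasDerivWithinAt (g k) (g (k + 1) t) (uIcc a b) t)
    (hgm : ContinuousOn (g m) (uIcc a b)) :
    ∫ t in a..b, (derivative^[m] P).eval t * g 0 t =
      ∑ i ∈ Finset.range m, (-1) ^ i * ((derivative^[m - (i + 1)] P).eval b * g i b -
        (derivative^[m - (i + 1)] P).eval a * g i a) +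
      (-1) ^ m * ∫ t in a..b, P.eval t * g m t := by
  induction m generalizing g with
  | zero => simp
  | succ m ih =>
    have hg1 : ContinuousOn (g 1) (uIcc a b) := by
      rcases m with _ | m
      · exact hgm
      · exact fun t ht => (hg 1 (by omega) t ht).continuousWithinAt
    have hparts := integral_mul_deriv_eq_deriv_mul_of_hasDerivWithinAt
      (fun t _ => P.hasDerivWithinAt_eval_iterate_derivative m (uIcc a b) t) (hg 0 m.succ_pos)
      ((derivative^[m + 1] P).continuous.intervalIntegrable a b) hg1.intervalIntegrable
    have hrest := ih (fun k => g (k + 1)) (fun k hk => hg (k + 1) (by omega)) hgm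
    rw [Finset.sum_range_succ']
    simp only [Nat.add_sub_add_right, Nat.add_sub_cancel, zero_add, pow_succ, mul_neg_one, neg_mul,
      Finset.sum_neg_distrib, pow_zero, one_mul]
    linarith

theorem Polynomial.Monic.factorial_mul_sub_eq_integral_sub_sum {P : ℝ[X]} (hP : P.Monic) {m : ℕ}
    (hPm : P.natDegree = m) {a b : ℝ} (D : ℕ → ℝ → ℝ)
    (hD : ∀ k, 1 ≤ k → k ≤ m + 1 → ∀ t ∈ uIcc a b,
      HasDerivWithinAt (D k) (D (k + 1) t) (uIcc a b) t)
    (hDc : ContinuousOn (D (m + 2)) (uIcc a b)) :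
    (m.factorial : ℝ) * (D 1 b - D 1 a) =
      (-1) ^ m * (∫ t in a..b, P.eval t * D (m + 2) t) - ∑ i ∈ Finset.range m, (-1) ^ (i + 1) *
        ((derivative^[m - (i + 1)] P).eval b * D (i + 2) b -
          (derivative^[m - (i + 1)] P).eval a * D (i + 2) a) := by
  -- `P^{(m+1)} = 0`, and the `i = 0` boundary term of the integration by parts is `m! [D 1]ₐᵇ`.
  have hparts := integral_eval_iterate_derivative_mul P (m + 1) (fun k => D (k + 1))
    (fun k hk => hD (k + 1) (by omega) (by omega)) hDc
  have htop : derivative^[m] P = C (m.factorial : ℝ) := by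
    rw [← hPm, iterate_derivative_natDegree, hP.leadingCoeff, mul_one]
  rw [iterate_derivative_eq_zero (by omega), Finset.sum_range_succ'] at hparts
  simp only [eval_zero, zero_mul, integral_zero, Nat.add_sub_add_right, Nat.add_sub_cancel, htop,
    eval_C, zero_add, pow_zero, one_mul] at hparts
  simp only [add_assoc, one_add_one_eq_two, pow_succ _ m, mul_neg_one, neg_mul] at hparts
  linarith

theorem abs_eval_iterate_derivative_mul_le {P : ℝ[X]} {e i : ℕ} {τ h K δ : ℝ} (x : ℕ → ℝ)
    (hi : i < 2 * e) (hh : 0 ≤ h) (hh1 : h ≤ 1) (hK : 0 ≤ K) (hδ : 0 ≤ δ)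
    (hP : ∀ j ≤ 2 * e, |(derivative^[j] P).eval τ| ≤ K * h ^ (2 * e - j))
    (hPτ : ∀ j < e, (derivative^[j] P).eval τ = 0)
    (hx0 : x 0 = 0) (hx : ∀ j, 1 ≤ j → j < e → |x j| ≤ δ) :
    |(derivative^[2 * e - (i + 1)] P).eval τ * x i| ≤ K * δ * h ^ 2 := by
  rcases Nat.eq_zero_or_pos i with rfl | hi0
  · rw [hx0, mul_zero, abs_zero]
    positivity
  by_cases hie : i < e
  · have hpow : h ^ (2 * e - (2 * e - (i + 1))) ≤ h ^ 2 :=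
      pow_le_pow_of_le_one hh hh1 (by omega)
    rw [abs_mul]
    calc |(derivative^[2 * e - (i + 1)] P).eval τ| * |x i|
        ≤ K * h ^ (2 * e - (2 * e - (i + 1))) * δ :=
          mul_le_mul (hP _ (Nat.sub_le _ _)) (hx i hi0 hie) (abs_nonneg _) (by positivity)
      _ ≤ K * h ^ 2 * δ := by gcongr
      _ = K * δ * h ^ 2 := by ring
  · rw [hPτ _ (by omega), zero_mul, abs_zero]
    positivity

theorem abs_sum_neg_one_pow_mul_sub_le {m : ℕ} {u v : ℕ → ℝ} {c : ℝ} (hu : ∀ i < m, |u i| ≤ c)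
    (hv : ∀ i < m, |v i| ≤ c) :
    |∑ i ∈ Finset.range m, (-1) ^ (i + 1) * (u i - v i)| ≤ m * (2 * c) := by
  refine (Finset.abs_sum_le_sum_abs _ _).trans <|
    (Finset.sum_le_card_nsmul _ _ (2 * c) fun i hi => ?_).trans (by simp)
  rw [Finset.mem_range] at hi
  rw [abs_mul, abs_pow, abs_neg, abs_one, one_pow, one_mul, two_mul]
  exact (abs_sub _ _).trans (add_le_add (hu i hi) (hv i hi))

/-- Here `e = n - 1`, and `D k` stands for the defect `q^{(k)} - q_d^{(k)}`. -/
theorem exists_abs_sub_le_of_hasDerivWithinAt (e : ℕ) :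
    ∃ C > 0, ∀ h : ℝ, 0 < h → h ≤ 1 → ∀ M δ : ℝ, 0 ≤ δ → ∀ D : ℕ → ℝ → ℝ,
      (∀ k, 1 ≤ k → k ≤ 2 * e + 1 → ∀ t ∈ Icc 0 h,
        HasDerivWithinAt (D k) (D (k + 1) t) (Icc 0 h) t) →
      ContinuousOn (D (2 * e + 2)) (Icc 0 h) →
      (∀ t ∈ Icc 0 h, |D (2 * e + 2) t| ≤ M) →
      D 2 0 = 0 → D 2 h = 0 →
      (∀ j, 1 ≤ j → j < e → ∀ τ ∈ ({0, h} : Set ℝ), |D (j + 2) τ| ≤ δ) →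
      |D 1 h - D 1 0| ≤ C * (δ * h ^ 2 + M * h ^ (2 * e + 1)) := by
  obtain ⟨K, hK, hPK⟩ := exists_abs_eval_iterate_derivative_hermiteKernel_le e
  refine ⟨(4 * e + 1) * K, by positivity, fun h hh hh1 M δ hδ D hD hDc hM hD20 hD2h hDδ => ?_⟩
  have hI : uIcc 0 h = Icc 0 h := uIcc_of_le hh.le
  have hkey := (monic_hermiteKernel e h).factorial_mul_sub_eq_integral_sub_sum
    (natDegree_hermiteKernel e h) D (by rw [hI]; exact hD) (by rw [hI]; exact hDc)
  rw [(even_two_mul e).neg_one_pow, one_mul] at hkey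
  set P := hermiteKernel e h
  have hM0 : 0 ≤ M := (abs_nonneg _).trans (hM 0 ⟨le_rfl, hh.le⟩)
  have hterm : ∀ τ ∈ ({0, h} : Set ℝ), ∀ i < 2 * e,
      |(derivative^[2 * e - (i + 1)] P).eval τ * D (i + 2) τ| ≤ K * δ * h ^ 2 := by
    intro τ hτ i hi
    have hτI : τ ∈ Icc 0 h := by rcases hτ with rfl | rfl <;> simp [hh.le]
    refine abs_eval_iterate_derivative_mul_le (fun j => D (j + 2) τ) hi hh.le hh1 hK.le hδ
      (fun j hj => hPK h hh j hj τ hτI) ?_ ?_ (fun j hj1 hj => hDδ j hj1 hj τ hτ)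
    · rcases hτ with rfl | rfl
      exacts [fun j hj => eval_iterate_derivative_hermiteKernel_zero _ hj,
        fun j hj => eval_iterate_derivative_hermiteKernel_self _ hj]
    · rcases hτ with rfl | rfl
      exacts [hD20, hD2h]
  have hboundary := abs_sum_neg_one_pow_mul_sub_le (fun i hi => hterm h (by simp) i hi)
    (fun i hi => hterm 0 (by simp) i hi)
  have hremainder : |∫ t in 0..h, P.eval t * D (2 * e + 2) t| ≤ K * h ^ (2 * e) * M * h := by
    have hbound : ∀ t ∈ uIoc 0 h, ‖P.eval t * D (2 * e + 2) t‖ ≤ K * h ^ (2 * e) * M := by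
      intro t ht
      rw [uIoc_of_le hh.le] at ht
      rw [Real.norm_eq_abs, abs_mul]
      exact mul_le_mul (hPK h hh 0 (Nat.zero_le _) t (Ioc_subset_Icc_self ht))
        (hM t (Ioc_subset_Icc_self ht)) (abs_nonneg _) (by positivity)
    simpa [abs_of_pos hh] using norm_integral_le_of_norm_le_const hbound
  have hfac : (1 : ℝ) ≤ (2 * e).factorial := mod_cast (2 * e).factorial_pos
  calc |D 1 h - D 1 0| ≤ (2 * e).factorial * |D 1 h - D 1 0| :=
        le_mul_of_one_le_left (abs_nonneg _) hfac
    _ = |_ - _| := by rw [← hkey, abs_mul, Nat.abs_cast]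
    _ ≤ K * h ^ (2 * e) * M * h + (2 * e : ℕ) * (2 * (K * δ * h ^ 2)) :=
        (abs_sub _ _).trans (add_le_add hremainder hboundary)
    _ ≤ (4 * e + 1) * K * (δ * h ^ 2 + M * h ^ (2 * e + 1)) := by
        have ha : 0 ≤ K * δ * h ^ 2 := by positivity
        have hb : 0 ≤ (e : ℝ) * (K * M * h ^ (2 * e + 1)) := by positivity
        rw [pow_succ h (2 * e)] at hb ⊢
        push_cast
        nlinarith

/-- **Integrated Hermite-remainder estimate for the velocity defect.**
Let `n ≥ 2`.  There is a constant `C > 0`, depending only on `n`, such that for every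
`0 < h ≤ 1`, every `2n`-times continuously differentiable `q` on `[0, h]` with
`|q^{(2n)}| ≤ M` on `[0, h]`, `0 ≤ δ`, and every polynomial `q_d` of degree at most `2n - 1` with
`q̈_d(0) = q̈(0)`, `q̈_d(h) = q̈(h)` and `|q_d^{(j+2)}(τ) - q^{(j+2)}(τ)| ≤ δ` for all
`j = 1, …, n-2` and `τ ∈ {0, h}`, one has
`|(q̇(h) - q̇_d(h)) - (q̇(0) - q̇_d(0))| ≤ C (δ h² + M h^{2n-1})`. -/
theorem velocity_defect_estimate (n : ℕ) (hn : 2 ≤ n) :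
    ∃ C > 0,
      ∀ h : ℝ, 0 < h → h ≤ 1 →
      ∀ M δ : ℝ, 0 ≤ δ →
      ∀ q : ℝ → ℝ, ContDiffOn ℝ ((2 * n : ℕ) : ℕ∞) q (Set.Icc 0 h) →
        (∀ t ∈ Set.Icc (0 : ℝ) h, |iteratedDerivWithin (2 * n) q (Set.Icc 0 h) t| ≤ M) →
      ∀ qd : Polynomial ℝ, qd.natDegree ≤ 2 * n - 1 →
        (Polynomial.derivative^[2] qd).eval 0 = iteratedDerivWithin 2 q (Set.Icc 0 h) 0 →
        (Polynomial.derivative^[2] qd).eval h = iteratedDerivWithin 2 q (Set.Icc 0 h) h →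
        (∀ j : ℕ, 1 ≤ j → j ≤ n - 2 → ∀ τ ∈ ({0, h} : Set ℝ),
          |(Polynomial.derivative^[j + 2] qd).eval τ -
              iteratedDerivWithin (j + 2) q (Set.Icc 0 h) τ| ≤ δ) →
        |(iteratedDerivWithin 1 q (Set.Icc 0 h) h - (Polynomial.derivative qd).eval h) -
            (iteratedDerivWithin 1 q (Set.Icc 0 h) 0 - (Polynomial.derivative qd).eval 0)| ≤
          C * (δ * h ^ 2 + M * h ^ (2 * n - 1)) := by
  obtain ⟨e, rfl⟩ : ∃ e, n = e + 1 := ⟨n - 1, by omega⟩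
  obtain ⟨C, hC, hestimate⟩ := exists_abs_sub_le_of_hasDerivWithinAt e
  refine ⟨C, hC, fun h hh hh1 M δ hδ q hq hM qd hqd hq20 hq2h hqj => ?_⟩
  rw [show 2 * (e + 1) = 2 * e + 2 by ring] at hq hM hqd
  rw [show 2 * (e + 1) - 1 = 2 * e + 1 by omega]
  set I := Icc (0 : ℝ) h
  have hI : UniqueDiffOn ℝ I := uniqueDiffOn_Icc hh
  set D : ℕ → ℝ → ℝ := fun k t => iteratedDerivWithin k q I t - (derivative^[k] qd).eval t
  have hD : ∀ k < 2 * e + 2, ∀ t ∈ I, HasDerivWithinAt (D k) (D (k + 1) t) I t :=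
    fun k hk t ht => (hq.hasDerivWithinAt_iteratedDerivWithin hI (mod_cast hk) ht).sub
      (qd.hasDerivWithinAt_eval_iterate_derivative k I t)
  have htop : D (2 * e + 2) = iteratedDerivWithin (2 * e + 2) q I := by
    simp [D, iterate_derivative_eq_zero (by omega : qd.natDegree < 2 * e + 2)]
  exact hestimate h hh hh1 M δ hδ D (fun k _ hk => hD k (by omega))
    (htop ▸ hq.continuousOn_iteratedDerivWithin le_rfl hI) (htop ▸ hM)
    (sub_eq_zero.mpr hq20.symm) (sub_eq_zero.mpr hq2h.symm)
    (fun j hj1 hj τ hτ => by rw [abs_sub_comm]; exact hqj j hj1 (by omega) τ hτ)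
end

section
/- Let k ≥ 1 be an integer, let G : ℝ × ℝ → ℝ be of class C^k with all partial derivatives of order at most k bounded in absolute value by M, and let R > 0. Let u, w : I → ℝ be k-times continuously differentiable functions on an open interval I, let τ ∈ I, and suppose |u^{(r)}(τ)| ≤ R and |w^{(r)}(τ)| ≤ R for all r = 0, …, k. Then there exists a constant C > 0 depending only on k, M, and R such that | (d/dt)^{k−1} [ G(u(t), u̇(t)) ] |_{t=τ} − (d/dt)^{k−1} [ G(w(t), ẇ(t)) ] |_{t=τ} | ≤ C · max_{0 ≤ r ≤ k} |u^{(r)}(τ) − w^{(r)}(τ)|. -/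
/-!
By Faà di Bruno, `(d/dt)^{k-1} G(u, u̇)` at `τ` is a sum, over the ordered partitions of
`k - 1` points, of multilinear expressions in the derivatives of `G` at `(u τ, u̇ τ)` and in the
`(k-1)`-jet of `t ↦ (u t, u̇ t)` at `τ`, which is made of `u(τ), …, u^{(k)}(τ)`. Each such
expression is Lipschitz on bounded sets of these data; the derivatives of `G` of order `< k` are
`M`-Lipschitz by the mean value theorem, as the next derivative is bounded by `M`.
-/

open Set

namespace OrderedFinpartition

variable {𝕜 E F G : Type*} [NontriviallyNormedField 𝕜]
  [NormedAddCommGroup E] [NormedSpace 𝕜 E] [NormedAddCommGroup F] [NormedSpace 𝕜 F]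
  [NormedAddCommGroup G] [NormedSpace 𝕜 G]

theorem norm_compAlongOrderedFinpartition_sub_le_of_le {n : ℕ} (c : OrderedFinpartition n)
    {f₁ f₂ : F [×c.length]→L[𝕜] G} {g₁ g₂ : ∀ i, E [×c.partSize i]→L[𝕜] F} {M Q ε δ : ℝ}
    (hQ : 1 ≤ Q) (hδ : 0 ≤ δ) (hf₁ : ‖f₁‖ ≤ M) (hf : ‖f₁ - f₂‖ ≤ ε)
    (hg₁ : ∀ i, ‖g₁ i‖ ≤ Q) (hg₂ : ∀ i, ‖g₂ i‖ ≤ Q) (hg : ∀ i, ‖g₁ i - g₂ i‖ ≤ δ) :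
    ‖c.compAlongOrderedFinpartition f₁ g₁ - c.compAlongOrderedFinpartition f₂ g₂‖ ≤
      (M * n * δ + ε) * Q ^ n := by
  have hQ0 : 0 ≤ Q := zero_le_one.trans hQ
  have hM : 0 ≤ M := (norm_nonneg _).trans hf₁
  have hε : 0 ≤ ε := (norm_nonneg _).trans hf
  have hlen : c.length ≤ n := c.length_le
  have hmax : max ‖g₁‖ ‖g₂‖ ^ (c.length - 1) ≤ Q ^ n := calc
    _ ≤ Q ^ (c.length - 1) := by
      gcongr
      exact max_le ((pi_norm_le_iff_of_nonneg hQ0).2 hg₁) ((pi_norm_le_iff_of_nonneg hQ0).2 hg₂)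
    _ ≤ Q ^ n := pow_le_pow_right₀ hQ (by omega)
  have hprod : ∏ i, ‖g₂ i‖ ≤ Q ^ n := calc
    _ ≤ Q ^ c.length := by
      simpa using Finset.prod_le_prod (s := .univ) (fun i _ ↦ norm_nonneg _) (fun i _ ↦ hg₂ i)
    _ ≤ Q ^ n := pow_le_pow_right₀ hQ hlen
  calc _ ≤ ‖f₁‖ * c.length * max ‖g₁‖ ‖g₂‖ ^ (c.length - 1) * ‖g₁ - g₂‖ +
        ‖f₁ - f₂‖ * ∏ i, ‖g₂ i‖ :=
      c.norm_compAlongOrderedFinpartition_sub_compAlongOrderedFinpartition_le f₁ f₂ g₁ g₂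
    _ ≤ M * n * Q ^ n * δ + ε * Q ^ n := by
      gcongr
      exact (pi_norm_le_iff_of_nonneg hδ).2 hg
    _ = (M * n * δ + ε) * Q ^ n := by ring

end OrderedFinpartition

namespace FormalMultilinearSeries

variable {𝕜 E F G : Type*} [NontriviallyNormedField 𝕜]
  [NormedAddCommGroup E] [NormedSpace 𝕜 E] [NormedAddCommGroup F] [NormedSpace 𝕜 F]
  [NormedAddCommGroup G] [NormedSpace 𝕜 G]

theorem norm_taylorComp_sub_taylorComp_le {q₁ q₂ : FormalMultilinearSeries 𝕜 F G}
    {p₁ p₂ : FormalMultilinearSeries 𝕜 E F} {n : ℕ} {M Q ε δ : ℝ} (hQ : 1 ≤ Q) (hδ : 0 ≤ δ)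
    (hq₁ : ∀ m ≤ n, ‖q₁ m‖ ≤ M) (hq : ∀ m ≤ n, ‖q₁ m - q₂ m‖ ≤ ε)
    (hp₁ : ∀ m ≤ n, ‖p₁ m‖ ≤ Q) (hp₂ : ∀ m ≤ n, ‖p₂ m‖ ≤ Q)
    (hp : ∀ m ≤ n, ‖p₁ m - p₂ m‖ ≤ δ) :
    ‖q₁.taylorComp p₁ n - q₂.taylorComp p₂ n‖ ≤
      Fintype.card (OrderedFinpartition n) * ((M * n * δ + ε) * Q ^ n) := by
  simp only [FormalMultilinearSeries.taylorComp, ← Finset.sum_sub_distrib]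
  refine (norm_sum_le _ _).trans ?_
  rw [← nsmul_eq_mul, ← Finset.card_univ]
  exact Finset.sum_le_card_nsmul _ _ _ fun c _ ↦
    c.norm_compAlongOrderedFinpartition_sub_le_of_le hQ hδ (hq₁ _ c.length_le)
      (hq _ c.length_le) (fun i ↦ hp₁ _ (c.partSize_le i)) (fun i ↦ hp₂ _ (c.partSize_le i))
      (fun i ↦ hp _ (c.partSize_le i))

end FormalMultilinearSeries

section Composition

variable {E F H : Type*} [NormedAddCommGroup E] [NormedSpace ℝ E]
  [NormedAddCommGroup F] [NormedSpace ℝ F] [NormedAddCommGroup H] [NormedSpace ℝ H]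

theorem norm_iteratedFDeriv_sub_le_of_norm_iteratedFDeriv_succ_le {f : E → F} {m : ℕ} {M : ℝ}
    (hf : ContDiff ℝ (m + 1) f) (hM : ∀ x, ‖iteratedFDeriv ℝ (m + 1) f x‖ ≤ M) (x y : E) :
    ‖iteratedFDeriv ℝ m f x - iteratedFDeriv ℝ m f y‖ ≤ M * ‖x - y‖ :=
  Convex.norm_image_sub_le_of_norm_fderiv_le
    (fun z _ ↦ hf.differentiable_iteratedFDeriv (by norm_cast; omega) z)
    (fun z _ ↦ norm_fderiv_iteratedFDeriv.trans_le (hM z)) convex_univ (mem_univ y) (mem_univ x)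

theorem norm_iteratedFDeriv_comp_sub_le {G : F → H} {γ₁ γ₂ : E → F} {x : E} {n : ℕ}
    {M Q δ : ℝ} (hG : ContDiff ℝ (n + 1) G) (hGM : ∀ m ≤ n + 1, ∀ y, ‖iteratedFDeriv ℝ m G y‖ ≤ M)
    (hγ₁ : ContDiffAt ℝ n γ₁ x) (hγ₂ : ContDiffAt ℝ n γ₂ x) (hQ : 1 ≤ Q) (hδ : 0 ≤ δ)
    (h₁ : ∀ m ≤ n, ‖iteratedFDeriv ℝ m γ₁ x‖ ≤ Q) (h₂ : ∀ m ≤ n, ‖iteratedFDeriv ℝ m γ₂ x‖ ≤ Q)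
    (hd : ∀ m ≤ n, ‖iteratedFDeriv ℝ m γ₁ x - iteratedFDeriv ℝ m γ₂ x‖ ≤ δ) :
    ‖iteratedFDeriv ℝ n (G ∘ γ₁) x - iteratedFDeriv ℝ n (G ∘ γ₂) x‖ ≤
      Fintype.card (OrderedFinpartition n) * M * (n + 1) * Q ^ n * δ := by
  have hM : 0 ≤ M := (norm_nonneg _).trans (hGM 0 (Nat.zero_le _) (γ₁ x))
  have hγ : ‖γ₁ x - γ₂ x‖ ≤ δ := by
    simpa only [iteratedFDeriv_zero_eq_comp, Function.comp_apply, ← map_sub,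
      LinearIsometryEquiv.norm_map] using hd 0 (Nat.zero_le _)
  have hGn : ContDiff ℝ n G := hG.of_le (by norm_cast; omega)
  rw [iteratedFDeriv_comp hGn.contDiffAt hγ₁ le_rfl, iteratedFDeriv_comp hGn.contDiffAt hγ₂ le_rfl]
  calc _ ≤ Fintype.card (OrderedFinpartition n) * ((M * n * δ + M * δ) * Q ^ n) :=
        FormalMultilinearSeries.norm_taylorComp_sub_taylorComp_le hQ hδ
          (fun m hm ↦ hGM m (by omega) _)
          (fun m hm ↦ (norm_iteratedFDeriv_sub_le_of_norm_iteratedFDeriv_succ_le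
            (hG.of_le (by norm_cast; omega)) (hGM (m + 1) (by omega)) _ _).trans
            (by gcongr)) h₁ h₂ hd
    _ = _ := by ring

end Composition

section TangentLift

variable {𝕜 F : Type*} [NontriviallyNormedField 𝕜] [NormedAddCommGroup F] [NormedSpace 𝕜 F]

theorem norm_iteratedFDeriv_sub_eq_norm_iteratedDeriv_sub (f g : 𝕜 → F) (n : ℕ) (x : 𝕜) :
    ‖iteratedFDeriv 𝕜 n f x - iteratedFDeriv 𝕜 n g x‖ =
      ‖iteratedDeriv n f x - iteratedDeriv n g x‖ := by
  simp only [iteratedFDeriv_eq_equiv_comp, Function.comp_apply, ← map_sub,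
    LinearIsometryEquiv.norm_map]

noncomputable def tangentLift (v : 𝕜 → F) (t : 𝕜) : F × F := (v t, deriv v t)

theorem ContDiffAt.tangentLift {v : 𝕜 → F} {t : 𝕜} {n : WithTop ℕ∞}
    (hv : ContDiffAt 𝕜 (n + 1) v t) : ContDiffAt 𝕜 n (tangentLift v) t :=
  (hv.of_le le_self_add).prodMk (hv.derivWithin le_rfl)

theorem iteratedFDeriv_tangentLift {v : 𝕜 → F} {t : 𝕜} {m : ℕ}
    (hv : ContDiffAt 𝕜 (m + 1) v t) :
    iteratedFDeriv 𝕜 m (tangentLift v) t =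
      (iteratedFDeriv 𝕜 m v t).prod (iteratedFDeriv 𝕜 m (deriv v) t) :=
  iteratedFDeriv_prodMk (hv.of_le le_self_add) (hv.derivWithin le_rfl) le_rfl

variable {n : ℕ} {t : 𝕜}

theorem norm_iteratedFDeriv_tangentLift_le {v : 𝕜 → F} {R : ℝ} (hv : ContDiffAt 𝕜 (n + 1) v t)
    (hR : ∀ r ≤ n + 1, ‖iteratedDeriv r v t‖ ≤ R) :
    ∀ m ≤ n, ‖iteratedFDeriv 𝕜 m (tangentLift v) t‖ ≤ R := fun m hm ↦ by
  rw [iteratedFDeriv_tangentLift (hv.of_le (by norm_cast; omega)),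
    ContinuousMultilinearMap.opNorm_prod, norm_iteratedFDeriv_eq_norm_iteratedDeriv,
    norm_iteratedFDeriv_eq_norm_iteratedDeriv, ← iteratedDeriv_succ']
  exact max_le (hR m (by omega)) (hR (m + 1) (by omega))

theorem norm_iteratedFDeriv_tangentLift_sub_le {u w : 𝕜 → F} {J : ℝ}
    (hu : ContDiffAt 𝕜 (n + 1) u t) (hw : ContDiffAt 𝕜 (n + 1) w t)
    (hJ : ∀ r ≤ n + 1, ‖iteratedDeriv r u t - iteratedDeriv r w t‖ ≤ J) :
    ∀ m ≤ n, ‖iteratedFDeriv 𝕜 m (tangentLift u) t - iteratedFDeriv 𝕜 m (tangentLift w) t‖ ≤ J :=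
  fun m hm ↦ by
    rw [iteratedFDeriv_tangentLift (hu.of_le (by norm_cast; omega)),
      iteratedFDeriv_tangentLift (hw.of_le (by norm_cast; omega)),
      ← ContinuousMultilinearMap.sub_prod_sub, ContinuousMultilinearMap.opNorm_prod,
      norm_iteratedFDeriv_sub_eq_norm_iteratedDeriv_sub,
      norm_iteratedFDeriv_sub_eq_norm_iteratedDeriv_sub, ← iteratedDeriv_succ', ← iteratedDeriv_succ']
    exact max_le (hJ m (by omega)) (hJ (m + 1) (by omega))

end TangentLift

/-- **Lipschitz dependence of time-derivatives of `G(u, u̇)` on the jet of `u`.**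
Let `k ≥ 1`, let `G : ℝ × ℝ → ℝ` be `C^k` with all (partial) derivatives of order at most `k`
bounded in norm by `M`, and let `R > 0`.  There is a constant `C > 0`, depending only on `k`,
`M`, `R`, such that for all `k`-times continuously differentiable `u`, `w` on an open interval
`(a, b)` and `τ ∈ (a, b)` with `|u^{(r)}(τ)| ≤ R`, `|w^{(r)}(τ)| ≤ R` for `r = 0, …, k`,
`|(d/dt)^{k-1}[G(u, u̇)](τ) - (d/dt)^{k-1}[G(w, ẇ)](τ)| ≤ C max_{0 ≤ r ≤ k} |u^{(r)}(τ) - w^{(r)}(τ)|`. -/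
theorem jet_lipschitz_time_derivative
    (k : ℕ) (hk : 1 ≤ k) (M R : ℝ) :
    ∃ C > 0,
      ∀ G : ℝ × ℝ → ℝ, ContDiff ℝ (k : ℕ∞) G →
        (∀ i ≤ k, ∀ p : ℝ × ℝ, ‖iteratedFDeriv ℝ i G p‖ ≤ M) →
      ∀ a b : ℝ, ∀ u w : ℝ → ℝ,
        ContDiffOn ℝ (k : ℕ∞) u (Set.Ioo a b) →
        ContDiffOn ℝ (k : ℕ∞) w (Set.Ioo a b) →
      ∀ τ ∈ Set.Ioo a b,
        (∀ r ≤ k, |iteratedDeriv r u τ| ≤ R) →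
        (∀ r ≤ k, |iteratedDeriv r w τ| ≤ R) →
        |iteratedDeriv (k - 1) (fun t => G (u t, deriv u t)) τ -
            iteratedDeriv (k - 1) (fun t => G (w t, deriv w t)) τ| ≤
          C * (Finset.range (k + 1)).sup' (by simp)
                (fun r => |iteratedDeriv r u τ - iteratedDeriv r w τ|) := by
  obtain ⟨n, rfl⟩ : ∃ n, k = n + 1 := ⟨k - 1, by omega⟩
  set Q := max R 1
  refine ⟨max (Fintype.card (OrderedFinpartition n) * M * (n + 1) * Q ^ n) 1,
    lt_max_of_lt_right one_pos, ?_⟩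
  intro G hG hGM a b u w hu hw τ hτ hRu hRw
  set J := (Finset.range (n + 1 + 1)).sup' (by simp)
    (fun r => |iteratedDeriv r u τ - iteratedDeriv r w τ|)
  have hJ : ∀ r ≤ n + 1, |iteratedDeriv r u τ - iteratedDeriv r w τ| ≤ J := fun r hr ↦
    Finset.le_sup' (fun r => |iteratedDeriv r u τ - iteratedDeriv r w τ|)
      (Finset.mem_range.2 (Nat.lt_succ_of_le hr))
  have hJ0 : 0 ≤ J := (abs_nonneg _).trans (hJ 0 (Nat.zero_le _))
  have hu' : ContDiffAt ℝ (n + 1) u τ := (hu.contDiffAt (isOpen_Ioo.mem_nhds hτ)).of_le (by simp)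
  have hw' : ContDiffAt ℝ (n + 1) w τ := (hw.contDiffAt (isOpen_Ioo.mem_nhds hτ)).of_le (by simp)
  have hRQ : ∀ v : ℝ → ℝ, (∀ r ≤ n + 1, |iteratedDeriv r v τ| ≤ R) →
      ∀ r ≤ n + 1, ‖iteratedDeriv r v τ‖ ≤ Q := fun v hv r hr ↦ (hv r hr).trans (le_max_left _ _)
  rw [Nat.add_sub_cancel, ← Real.norm_eq_abs, ← norm_iteratedFDeriv_sub_eq_norm_iteratedDeriv_sub]
  calc _ ≤ Fintype.card (OrderedFinpartition n) * M * (n + 1) * Q ^ n * J :=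
        norm_iteratedFDeriv_comp_sub_le (γ₁ := tangentLift u) (γ₂ := tangentLift w)
          (by exact_mod_cast hG) hGM hu'.tangentLift hw'.tangentLift (le_max_right _ _) hJ0
          (norm_iteratedFDeriv_tangentLift_le hu' (hRQ u hRu))
          (norm_iteratedFDeriv_tangentLift_le hw' (hRQ w hRw))
          (norm_iteratedFDeriv_tangentLift_sub_le hu' hw' hJ)
    _ ≤ _ := by gcongr; exact le_max_left _ _
end
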